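/- Suppose a discrete-time system x_{k+1} = f_d(x_k, u_k) is conjugate to the Brunovsky system via a state bijection Φ_x and input bijections Φ_u(x,·). Then for any initial state x_0 and target x* there exists an input sequence u_0,…,u_{n−1} steering x_0 to x* in n steps. -/

import Mathlib

/-- The Brunovsky shift matrix: ones on the superdiagonal. -/
def brunovskyA (n : ℕ) : Matrix (Fin n) (Fin n) ℝ :=
  Matrix.of fun i j => if (j : ℕ) = (i : ℕ) + 1 then 1 else 0

/-- The Brunovsky input vector: last standard basis vector. -/
def brunovskyB (n : ℕ) : Fin n → ℝ :=
  fun i => if (i : ℕ) = n - 1 then 1 else 0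

/-! A Brunovsky step shifts the state up by one coordinate and feeds the input into the last
coordinate, so after `n` steps the state consists exactly of the `n` inputs. Conjugacy transports
this to the original system, where surjectivity of each `Φu x` lets us choose the inputs so that
the transformed inputs are the coordinates of `Φx x*`. -/

theorem brunovskyA_mulVec_apply {n : ℕ} (z : Fin n → ℝ) (i : Fin n) :
    (brunovskyA n).mulVec z i = if h : (i : ℕ) + 1 < n then z ⟨(i : ℕ) + 1, h⟩ else 0 := by
  simp only [Matrix.mulVec, dotProduct, brunovskyA, Matrix.of_apply, ite_mul, one_mul, zero_mul]
  split_ifs with h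
  · have hj : ∀ j : Fin n, ((j : ℕ) = i + 1) = (j = ⟨i + 1, h⟩) := fun j => by
      rw [Fin.ext_iff]
    simp only [hj, Finset.sum_ite_eq', Finset.mem_univ, if_true]
  · exact Finset.sum_eq_zero fun j _ => if_neg (by omega)

theorem brunovsky_step_apply {n : ℕ} (z : Fin n → ℝ) (c : ℝ) (i : Fin n) :
    ((brunovskyA n).mulVec z + c • brunovskyB n) i =
      if h : (i : ℕ) + 1 < n then z ⟨(i : ℕ) + 1, h⟩ else c := by
  rw [Pi.add_apply, brunovskyA_mulVec_apply, Pi.smul_apply, brunovskyB, smul_eq_mul]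
  split_ifs <;> first | omega | simp

theorem shift_register_apply {n : ℕ} (z : ℕ → Fin n → ℝ) (v : ℕ → ℝ)
    (hz : ∀ k i, z (k + 1) i = if h : (i : ℕ) + 1 < n then z k ⟨(i : ℕ) + 1, h⟩ else v k) :
    ∀ m (i : Fin n), n ≤ i + m → z m i = v (i + m - n) := by
  intro m
  induction m with
  | zero => intro i hi; omega
  | succ m ih =>
    intro i hi
    rw [hz]
    split_ifs with h
    · rw [ih _ (by simp; omega)]
      congr 1
      simp only
      omega
    · congr 1
      omega

theorem exists_trajectory_with_virtual_input {X U : Type*} (fd : X → U → X) (Φu : X → U → ℝ)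
    (hΦu : ∀ x, Function.Surjective (Φu x)) (x0 : X) (w : ℕ → ℝ) :
    ∃ (u : ℕ → U) (xs : ℕ → X), xs 0 = x0 ∧
      (∀ k, xs (k + 1) = fd (xs k) (u k)) ∧ ∀ k, Φu (xs k) (u k) = w k := by
  choose ψ hψ using hΦu
  let xs : ℕ → X := fun k => Nat.rec x0 (fun k x => fd x (ψ x (w k))) k
  exact ⟨fun k => ψ (xs k) (w k), xs, rfl, fun _ => rfl, fun k => hψ _ _⟩

/-- A system conjugate to the Brunovsky system is reachable in `n` steps:
for any initial state `x₀` and any target `x*` there is an input sequence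
steering `x₀` to `x*` in `n` steps. -/
theorem conjugate_n_step_reachable (n : ℕ) {X U : Type*}
    (fd : X → U → X) (Φx : X ≃ (Fin n → ℝ)) (Φu : X → U → ℝ)
    (hΦu : ∀ x, Function.Bijective (Φu x))
    (hconj : ∀ x u, Φx (fd x u) =
      Matrix.mulVec (brunovskyA n) (Φx x) + Φu x u • brunovskyB n)
    (x0 xstar : X) :
    ∃ (u : ℕ → U) (xs : ℕ → X), xs 0 = x0 ∧
      (∀ k, xs (k + 1) = fd (xs k) (u k)) ∧ xs n = xstar := by
  let w : ℕ → ℝ := fun k => if h : k < n then Φx xstar ⟨k, h⟩ else 0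
  obtain ⟨u, xs, h0, hstep, hw⟩ :=
    exists_trajectory_with_virtual_input fd Φu (fun x => (hΦu x).2) x0 w
  have hshift := shift_register_apply (fun k => Φx (xs k)) w fun k i => by
    rw [hstep, hconj, hw, brunovsky_step_apply]
  refine ⟨u, xs, h0, hstep, Φx.injective (funext fun i => ?_)⟩
  rw [hshift n i (by omega), Nat.add_sub_cancel]
  exact dif_pos i.isLt
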